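/- arXiv:1804.05320 — 2 statements merged into one kernel-verified Lean document; each statement's English description precedes it below -/
import Mathlib

section
/- Let V(D) = ∫ (p(x) log D(x) + q(x) log(1 − D(x))) dμ(x), where p and q are probability densities with respect to a measure μ and D : X → (0,1) is measurable. Then for every admissible D, V(D) ≤ V(D*) where D*(x) = p(x)/(p(x)+q(x)) (defined arbitrarily where p(x)+q(x)=0). -/
open MeasureTheory

lemma key_ineq (a b t : ℝ) (ha : 0 ≤ a) (hb : 0 ≤ b)
    (ht : t ∈ Set.Ioo (0:ℝ) 1) :
    a * Real.log t + b * Real.log (1 - t) ≤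
      a * Real.log (a / (a + b)) + b * Real.log (1 - a / (a + b)) := by
  obtain ⟨ht0, ht1⟩ := ht
  have h1t : 0 < 1 - t := by linarith
  rcases eq_or_lt_of_le (add_nonneg ha hb) with hab | hab
  · have ha0 : a = 0 := by linarith [ha, hb, hab.symm ▸ (le_refl (0:ℝ))]
    have hb0 : b = 0 := by linarith
    simp [ha0, hb0]
  · have hsub : 1 - a / (a + b) = b / (a + b) := by
      field_simp; ring
    rw [hsub]
    rcases eq_or_lt_of_le ha with ha0 | ha0
    · have ha0' : a = 0 := ha0.symm
      subst ha0'
      have hbpos : 0 < b := by linarith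
      rw [show b / ((0:ℝ) + b) = 1 by field_simp; ring]
      simp only [zero_mul, zero_add, Real.log_one, mul_zero]
      exact mul_nonpos_of_nonneg_of_nonpos hb
        (Real.log_nonpos (by linarith) (by linarith))
    rcases eq_or_lt_of_le hb with hb0 | hb0
    · have hb0' : b = 0 := hb0.symm
      subst hb0'
      rw [show a / (a + (0:ℝ)) = 1 by field_simp; ring]
      simp only [zero_mul, add_zero, Real.log_one, mul_zero]
      exact mul_nonpos_of_nonneg_of_nonpos ha
        (Real.log_nonpos (by linarith) (by linarith))
    · -- both positive: use log x ≤ x - 1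
      have hA : a * (Real.log t - Real.log (a / (a + b))) ≤ t * (a + b) - a := by
        have : Real.log t - Real.log (a / (a + b)) = Real.log (t * (a + b) / a) := by
          rw [Real.log_div (by positivity) (ne_of_gt ha0),
            Real.log_div (by positivity) (ne_of_gt hab),
            Real.log_mul (ne_of_gt ht0) (ne_of_gt hab)]
          ring
        rw [this]
        have h := Real.log_le_sub_one_of_pos (show (0:ℝ) < t * (a + b) / a by positivity)
        calc a * Real.log (t * (a + b) / a) ≤ a * (t * (a + b) / a - 1) :=
              mul_le_mul_of_nonneg_left h ha
          _ = t * (a + b) - a := by field_simp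
      have hB : b * (Real.log (1 - t) - Real.log (b / (a + b))) ≤ (1 - t) * (a + b) - b := by
        have : Real.log (1 - t) - Real.log (b / (a + b)) =
            Real.log ((1 - t) * (a + b) / b) := by
          rw [Real.log_div (by positivity) (ne_of_gt hb0),
            Real.log_div (by positivity) (ne_of_gt hab),
            Real.log_mul (ne_of_gt h1t) (ne_of_gt hab)]
          ring
        rw [this]
        have h := Real.log_le_sub_one_of_pos
          (show (0:ℝ) < (1 - t) * (a + b) / b by positivity)
        calc b * Real.log ((1 - t) * (a + b) / b) ≤ b * ((1 - t) * (a + b) / b - 1) :=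
              mul_le_mul_of_nonneg_left h hb
          _ = (1 - t) * (a + b) - b := by field_simp
      nlinarith [hA, hB]

/-- Optimal discriminator (Theorem 1, measure-theoretic form): for densities
`p, q` w.r.t. a σ-finite measure `μ` and any measurable `D : X → (0,1)`,
`V(D) = ∫ (p log D + q log (1-D)) dμ ≤ V(D*)` where `D* = p/(p+q)`
(with the junk value `0` where `p + q = 0`). -/
theorem stmt_6 {X : Type*} [MeasurableSpace X] (μ : Measure X) [SigmaFinite μ]
    (p q : X → ℝ) (hpm : Measurable p) (hqm : Measurable q)
    (hp0 : ∀ x, 0 ≤ p x) (hq0 : ∀ x, 0 ≤ q x)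
    (hp1 : ∫ x, p x ∂μ = 1) (hq1 : ∫ x, q x ∂μ = 1)
    (D : X → ℝ) (hDm : Measurable D) (hD : ∀ x, D x ∈ Set.Ioo (0:ℝ) 1)
    (Dstar : X → ℝ) (hDstar : ∀ x, Dstar x = p x / (p x + q x))
    (hint : Integrable (fun x => p x * Real.log (D x) + q x * Real.log (1 - D x)) μ)
    (hintstar : Integrable
      (fun x => p x * Real.log (Dstar x) + q x * Real.log (1 - Dstar x)) μ) :
    ∫ x, (p x * Real.log (D x) + q x * Real.log (1 - D x)) ∂μ ≤
      ∫ x, (p x * Real.log (Dstar x) + q x * Real.log (1 - Dstar x)) ∂μ := by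
  refine integral_mono hint hintstar fun x => ?_
  rw [hDstar x]
  exact key_ineq (p x) (q x) (D x) (hp0 x) (hq0 x) (hD x)
end

section
/- For probability densities p and q with respect to μ, the maximal value of V(D) = ∫ (p log D + q log(1−D)) dμ over measurable D : X → (0,1), achieved at D* = p/(p+q), equals −2 log 2 + 2·JSD(p‖q), where JSD is the Jensen–Shannon divergence; in particular V(D*) ≥ −2 log 2, with equality iff p = q μ-a.e. -/
open Finset

/-- Kullback–Leibler divergence between finitely supported densities. -/
noncomputable def klDiv {X : Type*} [Fintype X] (p r : X → ℝ) : ℝ :=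
  ∑ x, p x * Real.log (p x / r x)

/-- Jensen–Shannon divergence. -/
noncomputable def jsd {X : Type*} [Fintype X] (p q : X → ℝ) : ℝ :=
  (1/2) * klDiv p (fun x => (p x + q x) / 2) +
  (1/2) * klDiv q (fun x => (p x + q x) / 2)

lemma aux1 (a m : ℝ) (ha : 0 ≤ a) (hm : 0 ≤ m) (h : 0 < a → 0 < m) :
    a - m ≤ a * Real.log (a / m) ∧ (a - m = a * Real.log (a / m) ↔ a = m) := by
  rcases ha.eq_or_lt with h0 | h0
  · simp only [← h0, zero_sub, zero_mul, zero_div]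
    exact ⟨by linarith, ⟨fun hh => by linarith, fun hh => by linarith⟩⟩
  · have hm' := h h0
    have hx : 0 < m / a := div_pos hm' h0
    have hlog : Real.log (m / a) ≤ m / a - 1 := Real.log_le_sub_one_of_pos hx
    have hrw : Real.log (a / m) = - Real.log (m / a) := by
      rw [Real.log_div h0.ne' hm'.ne', Real.log_div hm'.ne' h0.ne']; ring
    have hma : a * (m / a) = m := by field_simp
    constructor
    · rw [hrw]
      nlinarith [mul_le_mul_of_nonneg_left hlog ha]
    · constructor
      · intro heq
        by_contra hne
        have hne1 : m / a ≠ 1 := by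
          intro hh; apply hne; field_simp at hh; linarith
        have := Real.log_lt_sub_one_of_pos hx hne1
        rw [hrw] at heq
        nlinarith
      · intro heq
        subst heq
        rw [div_self h0.ne', Real.log_one]; ring
lemma aux2 (a b : ℝ) (ha : 0 ≤ a) (hb : 0 ≤ b) :
    a * Real.log (a / (a + b)) = -(a * Real.log 2) + a * Real.log (a / ((a + b) / 2)) := by
  rcases ha.eq_or_lt with h0 | h0
  · simp [← h0]
  · have hab : 0 < a + b := by linarith
    have h1 : a / ((a + b) / 2) = 2 * (a / (a + b)) := by field_simp
    rw [h1, Real.log_mul two_ne_zero (by positivity : a / (a + b) ≠ 0)]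
    ring
lemma aux3 (a b : ℝ) (ha : 0 ≤ a) (hb : 0 ≤ b) :
    b * Real.log (1 - a / (a + b)) = b * Real.log (b / (a + b)) := by
  rcases hb.eq_or_lt with h0 | h0
  · simp [← h0]
  · have hab : 0 < a + b := by linarith
    congr 2
    field_simp
    ring


/-- Discrete version: the value of the GAN objective at the optimal
discriminator `D* = p/(p+q)` equals `-2 log 2 + 2 JSD(p‖q)`; in particular it
is `≥ -2 log 2`, with equality iff `p = q`. -/
theorem stmt_11 {X : Type*} [Fintype X] (p q : X → ℝ)
    (hp : ∀ x, 0 ≤ p x) (hq : ∀ x, 0 ≤ q x)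
    (hp1 : ∑ x, p x = 1) (hq1 : ∑ x, q x = 1)
    (Dstar : X → ℝ) (hDstar : ∀ x, Dstar x = p x / (p x + q x)) :
    (∑ x, (p x * Real.log (Dstar x) + q x * Real.log (1 - Dstar x))) =
        -2 * Real.log 2 + 2 * jsd p q ∧
      -2 * Real.log 2 ≤
        ∑ x, (p x * Real.log (Dstar x) + q x * Real.log (1 - Dstar x)) ∧
      ((∑ x, (p x * Real.log (Dstar x) + q x * Real.log (1 - Dstar x))) =
          -2 * Real.log 2 ↔ p = q) := by
  have hmsum : ∑ x, (p x + q x) / 2 = 1 := by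
    rw [← Finset.sum_div, Finset.sum_add_distrib, hp1, hq1]; norm_num
  -- pointwise identity
  have key : ∀ x, p x * Real.log (Dstar x) + q x * Real.log (1 - Dstar x)
      = -((p x + q x) * Real.log 2) + (p x * Real.log (p x / ((p x + q x) / 2))
        + q x * Real.log (q x / ((p x + q x) / 2))) := by
    intro x
    rw [hDstar x, aux3 (p x) (q x) (hp x) (hq x), aux2 (p x) (q x) (hp x) (hq x)]
    have h2 := aux2 (q x) (p x) (hq x) (hp x)
    rw [add_comm (q x) (p x)] at h2
    rw [h2]; ring
  -- main equality
  have hV : (∑ x, (p x * Real.log (Dstar x) + q x * Real.log (1 - Dstar x)))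
      = -2 * Real.log 2 + 2 * jsd p q := by
    rw [Finset.sum_congr rfl (fun x _ => key x)]
    unfold jsd klDiv
    rw [Finset.sum_add_distrib, Finset.sum_add_distrib, Finset.sum_neg_distrib,
      ← Finset.sum_mul, Finset.sum_add_distrib, hp1, hq1]
    ring
  -- slack function
  set g : X → ℝ := fun x =>
    (p x * Real.log (p x / ((p x + q x) / 2)) - (p x - (p x + q x) / 2)) +
    (q x * Real.log (q x / ((p x + q x) / 2)) - (q x - (p x + q x) / 2)) with hgdef
  have hA : ∀ x, (p x - (p x + q x) / 2 ≤ p x * Real.log (p x / ((p x + q x) / 2)) ∧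
      (p x - (p x + q x) / 2 = p x * Real.log (p x / ((p x + q x) / 2)) ↔
        p x = (p x + q x) / 2)) :=
    fun x => aux1 (p x) ((p x + q x) / 2) (hp x)
      (by have := hp x; have := hq x; linarith)
      (fun h => by have := hq x; linarith)
  have hB : ∀ x, (q x - (p x + q x) / 2 ≤ q x * Real.log (q x / ((p x + q x) / 2)) ∧
      (q x - (p x + q x) / 2 = q x * Real.log (q x / ((p x + q x) / 2)) ↔
        q x = (p x + q x) / 2)) :=
    fun x => aux1 (q x) ((p x + q x) / 2) (hq x)
      (by have := hp x; have := hq x; linarith)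
      (fun h => by have := hp x; linarith)
  have hg0 : ∀ x ∈ Finset.univ, 0 ≤ g x := by
    intro x _
    have h1 := (hA x).1
    have h2 := (hB x).1
    simp only [hgdef]
    linarith
  have hgsum : ∑ x, g x = 2 * jsd p q := by
    simp only [hgdef]
    unfold jsd klDiv
    rw [Finset.sum_add_distrib, Finset.sum_sub_distrib, Finset.sum_sub_distrib,
      Finset.sum_sub_distrib, Finset.sum_sub_distrib, hmsum, hp1, hq1]
    ring
  have hjsd0 : 0 ≤ 2 * jsd p q := hgsum ▸ Finset.sum_nonneg hg0
  refine ⟨hV, by rw [hV]; linarith, ?_⟩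
  rw [hV]
  constructor
  · intro heq
    have hgz : ∑ x, g x = 0 := by rw [hgsum]; linarith
    have hall := (Finset.sum_eq_zero_iff_of_nonneg hg0).mp hgz
    funext x
    have hx := hall x (Finset.mem_univ x)
    have h1 := (hA x).1
    have h2 := (hB x).1
    simp only [hgdef] at hx
    have e1 : p x - (p x + q x) / 2 = p x * Real.log (p x / ((p x + q x) / 2)) := by
      linarith
    have e2 : q x - (p x + q x) / 2 = q x * Real.log (q x / ((p x + q x) / 2)) := by
      linarith
    have := (hA x).2.mp e1
    have := (hB x).2.mp e2
    linarith
  · intro heq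
    subst heq
    have hgz : ∀ x, g x = 0 := by
      intro x
      have e1 := (hA x).2.mpr (by ring)
      have e2 := (hB x).2.mpr (by ring)
      simp only [hgdef]
      linarith
    have : ∑ x, g x = 0 := Finset.sum_eq_zero (fun x _ => hgz x)
    rw [hgsum] at this
    linarith
end
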